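/- Let R → R' be a surjection of complete local commutative Noetherian W-algebras with residue field k, where W is a complete DVR, and suppose Spec(R) contains two distinct points mapping onto the two points of the generic fiber of Spec(W[ℤ/2]) via a surjection f: W[ℤ/2] → R. If there exist two distinct W-algebra homomorphisms R → W whose composites with f are the two distinct W-algebra homomorphisms W[ℤ/2] → W, then f is an isomorphism, i.e. R ≅ W[ℤ/2]. -/

import Mathlib

/-!
Write `σ` for the generator of `ℤ/2`. An element of `W[ℤ/2]` is `a + b σ`, and a `W`-algebra
map `χ : W[ℤ/2] → W` sends it to `a + b χ(σ)`; in particular `χ` is determined by `χ(σ)`.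
If two distinct such maps both kill `a + b σ`, then `b (χ₁(σ) - χ₂(σ)) = 0`, so `b = 0` and
`a = 0` as `W` is a domain. Hence `(φ ∘ f, ψ ∘ f) : W[ℤ/2] → W × W` is injective, and it
factors through `f`.
-/

open MonoidAlgebra

local notation "σ" => Multiplicative.ofAdd (1 : ZMod 2)

theorem MonoidAlgebra.algHom_apply_eq_sum {R A M : Type*} [CommSemiring R] [Semiring A]
    [Algebra R A] [Monoid M] [Fintype M] (F : MonoidAlgebra R M →ₐ[R] A)
    (z : MonoidAlgebra R M) :
    F z = ∑ m, z.coeff m • F (of R M m) := by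
  rw [lift_unique F z]
  exact Finsupp.sum_fintype _ _ fun _ => zero_smul R _

theorem Multiplicative.zmod_two_eq_one_or_eq_ofAdd_one (m : Multiplicative (ZMod 2)) :
    m = 1 ∨ m = σ := by
  revert m
  decide

theorem MonoidAlgebra.zmod_two_ext {R : Type*} [Semiring R]
    {x y : MonoidAlgebra R (Multiplicative (ZMod 2))}
    (h₁ : x.coeff 1 = y.coeff 1) (hσ : x.coeff σ = y.coeff σ) : x = y := by
  ext m
  rcases Multiplicative.zmod_two_eq_one_or_eq_ofAdd_one m with rfl | rfl <;> assumption

theorem MonoidAlgebra.zmod_two_algHom_apply {R A : Type*} [CommSemiring R] [Semiring A]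
    [Algebra R A] (F : MonoidAlgebra R (Multiplicative (ZMod 2)) →ₐ[R] A)
    (z : MonoidAlgebra R (Multiplicative (ZMod 2))) :
    F z = algebraMap R A (z.coeff 1) + z.coeff σ • F (of R _ σ) := by
  have huniv : (Finset.univ : Finset (Multiplicative (ZMod 2))) = {1, σ} := by decide
  rw [algHom_apply_eq_sum, huniv, Finset.sum_pair (by decide), map_one (of R _), map_one F,
    Algebra.algebraMap_eq_smul_one]

theorem MonoidAlgebra.zmod_two_algHom_ext {R A : Type*} [CommSemiring R] [Semiring A]
    [Algebra R A] {F G : MonoidAlgebra R (Multiplicative (ZMod 2)) →ₐ[R] A}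
    (h : F (of R _ σ) = G (of R _ σ)) : F = G := by
  ext z
  rw [zmod_two_algHom_apply F, zmod_two_algHom_apply G, h]

theorem MonoidAlgebra.zmod_two_injective_prod_of_ne {R : Type*} [CommRing R] [NoZeroDivisors R]
    {χ₁ χ₂ : MonoidAlgebra R (Multiplicative (ZMod 2)) →ₐ[R] R} (h : χ₁ ≠ χ₂) :
    Function.Injective (χ₁.prod χ₂) := by
  have hσ : χ₁ (of R _ σ) ≠ χ₂ (of R _ σ) := fun he => h (zmod_two_algHom_ext he)
  rw [injective_iff_map_eq_zero]
  intro z hz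
  obtain ⟨h₁, h₂⟩ := Prod.ext_iff.mp hz
  simp only [AlgHom.prod_apply, Prod.fst_zero, Prod.snd_zero] at h₁ h₂
  rw [zmod_two_algHom_apply, Algebra.algebraMap_self, RingHom.id_apply, smul_eq_mul] at h₁ h₂
  have hb : z.coeff σ = 0 := by
    have : z.coeff σ * (χ₁ (of R _ σ) - χ₂ (of R _ σ)) = 0 := by linear_combination h₁ - h₂
    exact (mul_eq_zero.mp this).resolve_right (sub_ne_zero.mpr hσ)
  have ha : z.coeff 1 = 0 := by simpa [hb] using h₁
  exact zmod_two_ext ha hb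

theorem surjection_from_group_ring_is_iso_general (W : Type) [CommRing W] [IsDomain W]
    (R : Type) [CommRing R] [Algebra W R]
    (f : MonoidAlgebra W (Multiplicative (ZMod 2)) →ₐ[W] R)
    (hf : Function.Surjective f)
    (φ ψ : R →ₐ[W] W) (hcomp : φ.comp f ≠ ψ.comp f) :
    Function.Bijective f :=
  ⟨(zmod_two_injective_prod_of_ne hcomp).of_comp (f := φ.prod ψ), hf⟩

/-- Let `W` be a complete discrete valuation ring of characteristic `0` with residue field of
characteristic `2` in which `2` is a uniformizer, let `R` be a complete local commutative
Noetherian `W`-algebra, and let `f : W[ℤ/2] → R` be a surjective `W`-algebra homomorphism.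
If there exist two distinct `W`-algebra homomorphisms `R → W` whose composites with `f`
are distinct (hence are the two distinct `W`-algebra homomorphisms `W[ℤ/2] → W`),
then `f` is an isomorphism, i.e. `R ≅ W[ℤ/2]`. -/
theorem surjection_from_group_ring_is_iso (W : Type) [CommRing W] [IsDomain W]
    [IsDiscreteValuationRing W] [CharZero W]
    [IsAdicComplete (IsLocalRing.maximalIdeal W) W]
    (hunif : Irreducible (2 : W)) (hres : CharP (IsLocalRing.ResidueField W) 2)
    (R : Type) [CommRing R] [IsLocalRing R] [IsNoetherianRing R]
    [IsAdicComplete (IsLocalRing.maximalIdeal R) R] [Algebra W R]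
    (f : MonoidAlgebra W (Multiplicative (ZMod 2)) →ₐ[W] R)
    (hf : Function.Surjective f)
    (φ ψ : R →ₐ[W] W) (hdist : φ ≠ ψ) (hcomp : φ.comp f ≠ ψ.comp f) :
    Function.Bijective f :=
  surjection_from_group_ring_is_iso_general W R f hf φ ψ hcomp
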